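/- In algorithm AlgAU, if at a time t ≥ T_1 (after which the graph is always out-protected and justified) the graph is protected, then the graph is good, i.e., no node is faulty. -/
import Mathlib


set_option autoImplicit false

/-- A turn of AlgAU: able turns `Able(ℓ)` for `1 ≤ |ℓ| ≤ k` and faulty turns
`Faulty(ℓ)` for `2 ≤ |ℓ| ≤ k`. -/
inductive Turn where
  | able (ℓ : ℤ)
  | faulty (ℓ : ℤ)
deriving DecidableEq

/-- The level of a turn. -/
def Turn.level : Turn → ℤ
  | .able ℓ => ℓ
  | .faulty ℓ => ℓ

/-- Whether a turn is able. -/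
def Turn.isAble : Turn → Prop
  | .able _ => True
  | .faulty _ => False

/-- A turn belongs to the state set of AlgAU with parameter `k`. -/
def ValidTurn (k : ℤ) : Turn → Prop
  | .able ℓ => 1 ≤ |ℓ| ∧ |ℓ| ≤ k
  | .faulty ℓ => 2 ≤ |ℓ| ∧ |ℓ| ≤ k

/-- The forward operator: `φ(-1) = 1`, `φ(k) = -k`, `φ(ℓ) = ℓ + 1` otherwise. -/
def forwardOp (k : ℤ) (ℓ : ℤ) : ℤ :=
  if ℓ = -1 then 1 else if ℓ = k then -k else ℓ + 1

/-- Levels `ℓ, ℓ'` are adjacent: `ℓ' ∈ {ℓ, φ(ℓ), φ⁻¹(ℓ)}`. -/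
def adjLvl (k : ℤ) (ℓ ℓ' : ℤ) : Prop :=
  ℓ' = ℓ ∨ ℓ' = forwardOp k ℓ ∨ ℓ = forwardOp k ℓ'

/-- `ψ⁻¹(ℓ)`: the level one unit inwards of `ℓ` (same sign, absolute value decreased). -/
def inwd (ℓ : ℤ) : ℤ := if 0 < ℓ then ℓ - 1 else ℓ + 1

/-- `m` is strictly outwards of `ℓ`: same sign and strictly larger absolute value. -/
def strictOut (ℓ m : ℤ) : Prop := (0 < ℓ ∧ ℓ < m) ∨ (ℓ < 0 ∧ m < ℓ)

/-- The inclusive neighborhood `N⁺(v)`. -/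
def closedNbhd {V : Type} (G : SimpleGraph V) (v : V) : Set V := {u | u = v ∨ G.Adj u v}

/-- Node `v` is protected under configuration `c`: all incident edges have adjacent
endpoint levels. -/
def NodeProt {V : Type} (k : ℤ) (G : SimpleGraph V) (c : V → Turn) (v : V) : Prop :=
  ∀ u, G.Adj u v → adjLvl k ((c v).level) ((c u).level)

/-- Node `v` is good: protected and sensing no faulty turn. -/
def NodeGood {V : Type} (k : ℤ) (G : SimpleGraph V) (c : V → Turn) (v : V) : Prop :=
  NodeProt k G c v ∧ ∀ u ∈ closedNbhd G v, (c u).isAble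

/-- Condition for a type AA transition of `v` from `Able(ℓ)` to `Able(φ(ℓ))`:
`v` is good and all sensed levels belong to `{ℓ, φ(ℓ)}`. -/
def AAcond {V : Type} (k : ℤ) (G : SimpleGraph V) (c : V → Turn) (v : V) (ℓ : ℤ) : Prop :=
  c v = .able ℓ ∧ NodeGood k G c v ∧
    ∀ u ∈ closedNbhd G v, (c u).level = ℓ ∨ (c u).level = forwardOp k ℓ

/-- Condition for a type AF transition of `v` from `Able(ℓ)` to `Faulty(ℓ)`
(`2 ≤ |ℓ|`): `v` is not protected or senses the turn `Faulty(ψ⁻¹(ℓ))`. -/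
def AFcond {V : Type} (k : ℤ) (G : SimpleGraph V) (c : V → Turn) (v : V) (ℓ : ℤ) : Prop :=
  c v = .able ℓ ∧ 2 ≤ |ℓ| ∧
    (¬ NodeProt k G c v ∨ ∃ u ∈ closedNbhd G v, c u = .faulty (inwd ℓ))

/-- Condition for a type FA transition of `v` from `Faulty(ℓ)` to `Able(ψ⁻¹(ℓ))`:
`v` senses no level strictly outwards of `ℓ`. -/
def FAcond {V : Type} (G : SimpleGraph V) (c : V → Turn) (v : V) (ℓ : ℤ) : Prop :=
  c v = .faulty ℓ ∧ ∀ u ∈ closedNbhd G v, ¬ strictOut ℓ ((c u).level)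

/-- The new turn `q` of an activated node `v` in one step of AlgAU. -/
def StepNode {V : Type} (k : ℤ) (G : SimpleGraph V) (c : V → Turn) (v : V) (q : Turn) : Prop :=
  (∀ ℓ, AAcond k G c v ℓ → q = .able (forwardOp k ℓ)) ∧
  (∀ ℓ, AFcond k G c v ℓ → ¬ AAcond k G c v ℓ → q = .faulty ℓ) ∧
  (∀ ℓ, FAcond G c v ℓ → q = .able (inwd ℓ)) ∧
  ((∀ ℓ, ¬ AAcond k G c v ℓ ∧ ¬ AFcond k G c v ℓ ∧ ¬ FAcond G c v ℓ) → q = c v)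

/-- One asynchronous step of AlgAU with activation set `A`: activated nodes follow
the transition rules, the others keep their turns. -/
def Step {V : Type} (k : ℤ) (G : SimpleGraph V) (A : Set V) (c c' : V → Turn) : Prop :=
  ∀ v, (v ∉ A → c' v = c v) ∧ (v ∈ A → StepNode k G c v (c' v))

/-- Node `v` is unjustifiably faulty under configuration `c`: it is faulty, yet
protected and with no neighbor in the faulty turn one unit inwards. -/
def UnjustFaulty {V : Type} (k : ℤ) (G : SimpleGraph V) (c : V → Turn) (v : V) : Prop :=
  ∃ ℓ, c v = .faulty ℓ ∧ NodeProt k G c v ∧ ¬ ∃ u, G.Adj u v ∧ c u = .faulty (inwd ℓ)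

/-- The graph is out-protected under `c`: every non-protected edge joins nodes
whose levels have opposite signs. -/
def GraphOutProt {V : Type} (k : ℤ) (G : SimpleGraph V) (c : V → Turn) : Prop :=
  ∀ u v, G.Adj u v → ¬ adjLvl k ((c u).level) ((c v).level) →
    (c u).level * (c v).level < 0

/-- in AlgAU, at a time `t ≥ T₁` after which the graph is always
out-protected and justified (no unjustifiably faulty nodes), if the graph is
protected at time `t`, then it is good: no node is faulty. -/
theorem stmt_11 {V : Type} [Fintype V] (G : SimpleGraph V) (D : ℕ) (k : ℤ)
    (hk : k = 3 * D + 2)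
    (σ : ℕ → V → Turn) (A : ℕ → Set V)
    (hvalid : ∀ t v, ValidTurn k (σ t v))
    (hstep : ∀ t, Step k G (A t) (σ t) (σ (t + 1)))
    (T1 : ℕ)
    (hout : ∀ s, T1 ≤ s → GraphOutProt k G (σ s))
    (hjust : ∀ s, T1 ≤ s → ∀ v, ¬ UnjustFaulty k G (σ s) v)
    (t : ℕ) (ht : T1 ≤ t)
    (hprot : ∀ v, NodeProt k G (σ t) v) :
    ∀ v, NodeGood k G (σ t) v := by
  -- Key: no node is faulty, by strong induction on |ℓ|.
  have key : ∀ n : ℕ, ∀ v ℓ, σ t v = .faulty ℓ → |ℓ|.toNat ≤ n → False := by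
    intro n
    induction n with
    | zero =>
      intro v ℓ hv hle
      have hval := hvalid t v
      rw [hv] at hval
      have h2 : (2:ℤ) ≤ |ℓ| := hval.1
      omega
    | succ n ih =>
      intro v ℓ hv hle
      have hval := hvalid t v
      rw [hv] at hval
      have h2 : (2:ℤ) ≤ |ℓ| := hval.1
      have hnu := hjust t ht v
      rw [UnjustFaulty] at hnu
      push_neg at hnu
      obtain ⟨u, hadj, hu⟩ := hnu ℓ hv (hprot v)
      have hvalu := hvalid t u
      rw [hu] at hvalu
      have h2u : (2:ℤ) ≤ |inwd ℓ| := hvalu.1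
      have : |inwd ℓ| = |ℓ| - 1 := by
        unfold inwd
        rcases lt_or_ge 0 ℓ with h | h
        · rw [if_pos h, abs_of_pos h, abs_of_nonneg (by omega)]
        · have h3 : ℓ ≤ -2 := by rcases abs_cases ℓ with ⟨h', _⟩ | ⟨h', _⟩ <;> omega
          rw [if_neg (by omega), abs_of_neg (by omega), abs_of_nonpos (by omega)]; ring
      exact ih u (inwd ℓ) hu (by omega)
  intro v
  refine ⟨hprot v, ?_⟩
  intro u _
  cases hu : σ t u with
  | able ℓ => trivial
  | faulty ℓ => exact absurd (key (|ℓ|.toNat) u ℓ hu le_rfl) not_false
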